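/- arXiv:1310.8149 — 5 statements merged into one kernel-verified Lean document; each statement's English description precedes it below -/
import Mathlib

section
/- Let A be a nonzero matrix over a field 𝕜 indexed by (Fin m × Fin p) rows and (Fin n × Fin q) columns, regarded as an m×n block matrix with p×q blocks. Then there exist an m×n matrix B and a p×q matrix C with A = B ⊗ C if and only if the block vec matrix vec^{(p×q)}(A) has rank 1. -/
/-!
`blockVec` is a bijection sending `B ⊗ₖ C` to the outer product of the vectorisations of `B`
and `C`, and a matrix over a field has rank at most one exactly when it is such an outer product.
Rank exactly one then rules out only `A = 0`.
-/

open Matrix Kronecker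

/-- The block vec matrix of an `mp × nq` matrix `A`, viewed as an `m × n` block matrix
with `p × q` blocks: its entry in row `(i, j)` and column `(k, l)` is `A (i, k) (j, l)`. -/
def blockVec {𝕜 : Type*} {m n p q : ℕ} (A : Matrix (Fin m × Fin p) (Fin n × Fin q) 𝕜) :
    Matrix (Fin m × Fin n) (Fin p × Fin q) 𝕜 :=
  Matrix.of fun r c => A (r.1, c.1) (r.2, c.2)

namespace Matrix

variable {K l o : Type*} [Field K] [Fintype o]

theorem rank_eq_zero_iff {A : Matrix l o K} : A.rank = 0 ↔ A = 0 := by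
  have := Module.Finite.span_of_finite K (Set.finite_range A.col)
  rw [rank_eq_finrank_span_cols, Submodule.finrank_eq_zero, Submodule.span_eq_bot,
    Set.forall_mem_range]
  exact Matrix.ext_col_iff.symm

theorem rank_le_one_iff_exists_vecMulVec {A : Matrix l o K} :
    A.rank ≤ 1 ↔ ∃ (u : l → K) (v : o → K), A = vecMulVec u v := by
  refine ⟨fun h => ?_, fun ⟨u, v, hA⟩ => hA ▸ rank_vecMulVec_le u v⟩
  have := Module.Finite.span_of_finite K (Set.finite_range A.col)
  rw [rank_eq_finrank_span_cols, Submodule.finrank_le_one_iff_isPrincipal,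
    Submodule.isPrincipal_iff] at h
  obtain ⟨u, hu⟩ := h
  have hcol : ∀ j, ∃ c : K, c • u = A.col j := fun j =>
    Submodule.mem_span_singleton.mp (hu ▸ Submodule.subset_span (Set.mem_range_self j))
  choose v hv using hcol
  refine ⟨u, v, ext fun i j => ?_⟩
  rw [vecMulVec_apply, mul_comm, ← col_apply A j i, ← hv j, Pi.smul_apply, smul_eq_mul]

theorem rank_eq_one_iff_exists_vecMulVec {A : Matrix l o K} :
    A.rank = 1 ↔ A ≠ 0 ∧ ∃ (u : l → K) (v : o → K), A = vecMulVec u v := by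
  rw [← rank_le_one_iff_exists_vecMulVec, Ne, ← rank_eq_zero_iff]
  omega

end Matrix

section BlockVec

variable {R : Type*} {m n p q : ℕ}

theorem blockVec_injective :
    Function.Injective (blockVec : Matrix (Fin m × Fin p) (Fin n × Fin q) R → _) :=
  fun _ _ h => ext fun r c => congrFun (congrFun h (r.1, c.1)) (r.2, c.2)

theorem blockVec_kronecker [Mul R] (B : Matrix (Fin m) (Fin n) R) (C : Matrix (Fin p) (Fin q) R) :
    blockVec (B ⊗ₖ C) = vecMulVec (fun r => B r.1 r.2) (fun c => C c.1 c.2) :=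
  rfl

theorem blockVec_eq_zero_iff [Zero R] {A : Matrix (Fin m × Fin p) (Fin n × Fin q) R} :
    blockVec A = 0 ↔ A = 0 :=
  blockVec_injective.eq_iff' rfl

theorem exists_kronecker_iff_exists_blockVec_eq_vecMulVec [Mul R]
    (A : Matrix (Fin m × Fin p) (Fin n × Fin q) R) :
    (∃ (B : Matrix (Fin m) (Fin n) R) (C : Matrix (Fin p) (Fin q) R), A = B ⊗ₖ C) ↔
      ∃ u v, blockVec A = vecMulVec u v := by
  constructor
  · rintro ⟨B, C, rfl⟩
    exact ⟨_, _, blockVec_kronecker B C⟩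
  · rintro ⟨u, v, huv⟩
    refine ⟨of (Function.curry u), of (Function.curry v), blockVec_injective ?_⟩
    rw [huv, blockVec_kronecker]
    rfl

end BlockVec

theorem kronecker_factorization_iff_rank_one {𝕜 : Type*} [Field 𝕜] {m n p q : ℕ}
    (A : Matrix (Fin m × Fin p) (Fin n × Fin q) 𝕜) (hA : A ≠ 0) :
    (∃ (B : Matrix (Fin m) (Fin n) 𝕜) (C : Matrix (Fin p) (Fin q) 𝕜), A = B ⊗ₖ C) ↔
      (blockVec A).rank = 1 := by
  rw [exists_kronecker_iff_exists_blockVec_eq_vecMulVec, rank_eq_one_iff_exists_vecMulVec,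
    Ne, blockVec_eq_zero_iff]
  exact (and_iff_right hA).symm
end

section
/- Let B be a nonzero n×n matrix over ℂ (or over ℝ). The Kronecker product B ⊗ B is a symmetric matrix (equal to its transpose) if and only if B is symmetric (Bᵀ = B) or skew-symmetric (Bᵀ = -B). -/
/-!
Since `(B ⊗ₖ B)ᵀ = Bᵀ ⊗ₖ Bᵀ`, the claim is that `A ⊗ₖ A` determines `A` up to sign. Comparing
the entries `A i j * A p q = B i j * B p q` at a nonzero entry `B p q` gives `A p q = ± B p q`,
and cancelling `B p q` carries that sign to every entry.
-/

open Matrix Kronecker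

namespace Matrix

variable {R : Type*} [CommRing R] [NoZeroDivisors R] {m n : Type*}

theorem kronecker_self_eq_kronecker_self_iff {A B : Matrix m n R} :
    A ⊗ₖ A = B ⊗ₖ B ↔ A = B ∨ A = -B := by
  constructor
  · intro h
    have entry : ∀ i j k l, A i j * A k l = B i j * B k l := fun i j k l => by
      simpa using congrFun (congrFun h (i, k)) (j, l)
    by_cases hB : B = 0
    · subst hB
      left
      ext i j
      simpa using entry i j i j
    obtain ⟨p, q, hpq⟩ : ∃ p q, B p q ≠ 0 := by
      by_contra! hzero
      exact hB (ext hzero)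
    rcases mul_self_eq_mul_self_iff.mp (entry p q p q) with hs | hs
    · left
      ext i j
      exact mul_right_cancel₀ hpq (by simpa only [hs] using entry i j p q)
    · right
      ext i j
      refine mul_right_cancel₀ hpq ?_
      have hij := entry i j p q
      rw [hs] at hij
      rw [neg_apply]
      linear_combination -hij
  · rintro (rfl | rfl)
    · rfl
    · ext
      simp

end Matrix

theorem kronecker_sq_isSymm_iff_general {𝕜 : Type*} [RCLike 𝕜] {n : ℕ}
    (B : Matrix (Fin n) (Fin n) 𝕜) :
    (B ⊗ₖ B).IsSymm ↔ Bᵀ = B ∨ Bᵀ = -B := by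
  rw [IsSymm, ← kroneckerMap_transpose, kronecker_self_eq_kronecker_self_iff]

theorem kronecker_sq_isSymm_iff {𝕜 : Type*} [RCLike 𝕜] {n : ℕ}
    (B : Matrix (Fin n) (Fin n) 𝕜) (hB : B ≠ 0) :
    (B ⊗ₖ B).IsSymm ↔ Bᵀ = B ∨ Bᵀ = -B :=
  kronecker_sq_isSymm_iff_general B
end

section
/- Let B be a nonzero n×n complex matrix. The Kronecker product B ⊗ B is Hermitian (equal to its conjugate transpose) if and only if B is Hermitian (B* = B) or skew-Hermitian (B* = -B). -/
open Matrix Kronecker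

theorem Function.eq_or_eq_neg_of_forall_mul_eq_mul {α R : Type*} [CommRing R] [NoZeroDivisors R]
    {f g : α → R} (h : ∀ x y, f x * f y = g x * g y) : f = g ∨ f = -g := by
  by_cases hg : g = 0
  · left
    funext x
    simpa [hg] using h x x
  obtain ⟨a, ha⟩ := Function.ne_iff.mp hg
  -- `f a = ± g a`, and cancelling `g a ≠ 0` in `f x * f a = g x * g a` gives `f x = ± g x` with the same sign.
  rcases mul_self_eq_mul_self_iff.mp (h a a) with hfa | hfa
  · left
    funext x
    exact mul_right_cancel₀ ha (by simpa [hfa] using h x a)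
  · right
    funext x
    refine mul_right_cancel₀ ha ?_
    simpa [hfa, neg_eq_iff_eq_neg] using h x a

theorem Matrix.kronecker_self_eq_kronecker_self_iff_s10 {m n R : Type*} [CommRing R]
    [NoZeroDivisors R] {A B : Matrix m n R} : A ⊗ₖ A = B ⊗ₖ B ↔ A = B ∨ A = -B := by
  constructor
  · intro h
    have hentries : ∀ x y : m × n, A x.1 x.2 * A y.1 y.2 = B x.1 x.2 * B y.1 y.2 :=
      fun x y => congrFun₂ h (x.1, y.1) (x.2, y.2)
    rcases Function.eq_or_eq_neg_of_forall_mul_eq_mul hentries with hAB | hAB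
    · exact .inl (funext₂ fun i j => congrFun hAB (i, j))
    · exact .inr (funext₂ fun i j => congrFun hAB (i, j))
  · rintro (rfl | rfl)
    · rfl
    · ext ⟨i, k⟩ ⟨j, l⟩
      exact neg_mul_neg _ _

theorem kronecker_sq_isHermitian_iff_general {n : ℕ}
    (B : Matrix (Fin n) (Fin n) ℂ) :
    (B ⊗ₖ B).IsHermitian ↔ Bᴴ = B ∨ Bᴴ = -B := by
  rw [IsHermitian, conjTranspose_kronecker, kronecker_self_eq_kronecker_self_iff_s10]

theorem kronecker_sq_isHermitian_iff {n : ℕ}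
    (B : Matrix (Fin n) (Fin n) ℂ) (hB : B ≠ 0) :
    (B ⊗ₖ B).IsHermitian ↔ Bᴴ = B ∨ Bᴴ = -B :=
  kronecker_sq_isHermitian_iff_general B
end

section
/- Let B be an n×n complex matrix. The Kronecker product B ⊗ B is Hermitian positive definite if and only if B is Hermitian and either B is positive definite or -B is positive definite. -/
/-!
On product vectors the quadratic form of `B ⊗ₖ B` factors:
`(x ⊗ y)ᴴ (B ⊗ₖ B) (x ⊗ y) = (xᴴ B x) (yᴴ B y)`. So if `B ⊗ₖ B` is positive definite, any two
values of the quadratic form `q x = xᴴ B x` at nonzero vectors have positive product. In `ℂ`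
this forces `q` to be real and of constant sign (since `q x₀ ^ 2 > 0` makes `q x₀` a nonzero
real), and a complex matrix with real quadratic form is Hermitian. Conversely
`(-B) ⊗ₖ (-B) = B ⊗ₖ B`, and Kronecker products of positive definite matrices are positive
definite.
-/

open Matrix Kronecker
open scoped ComplexOrder

theorem Complex.pos_or_neg_pos_of_mul_self_pos {c : ℂ} (h : 0 < c * c) : 0 < c ∨ 0 < -c := by
  obtain ⟨hre, him⟩ := Complex.lt_def.mp h
  simp only [zero_re, zero_im, mul_re, mul_im] at hre him
  have hc : c.im = 0 := by
    rcases mul_eq_zero.mp (show c.re * c.im = 0 by linarith) with h0 | h0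
    · nlinarith [mul_self_nonneg c.im]
    · exact h0
  have hre0 : c.re ≠ 0 := by
    rintro h0
    simp [h0, hc] at hre
  simp only [Complex.lt_def, neg_re, neg_im, zero_re, zero_im, hc, neg_zero, and_true]
  rcases hre0.lt_or_gt with hneg | hpos
  · exact .inr (neg_pos.mpr hneg)
  · exact .inl hpos

theorem Complex.forall_pos_or_forall_neg_pos_of_mul_pos {α : Type*} {p : α → Prop} {q : α → ℂ}
    (h : ∀ x y, p x → p y → 0 < q x * q y) : (∀ x, p x → 0 < q x) ∨ (∀ x, p x → 0 < -q x) := by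
  rcases em (∃ x₀, p x₀) with ⟨x₀, hx₀⟩ | hp
  · rcases pos_or_neg_pos_of_mul_self_pos (h x₀ x₀ hx₀ hx₀) with hc | hc
    · exact .inl fun y hy => pos_of_mul_pos_right (h x₀ y hx₀ hy) hc.le
    · refine .inr fun y hy => pos_of_mul_pos_right ?_ hc.le
      simpa only [neg_mul_neg] using h x₀ y hx₀ hy
  · exact .inl fun x hx => (hp ⟨x, hx⟩).elim

namespace Matrix

theorem neg_kronecker_neg {R ι κ μ ν : Type*} [Mul R] [HasDistribNeg R]
    (A : Matrix ι κ R) (B : Matrix μ ν R) : (-A) ⊗ₖ (-B) = A ⊗ₖ B := by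
  ext ⟨i, k⟩ ⟨j, l⟩
  exact neg_mul_neg (A i j) (B k l)

theorem dotProduct_kronecker_mulVec_mul {R ι κ μ ν : Type*} [CommSemiring R]
    [Fintype ι] [Fintype κ] [Fintype μ] [Fintype ν]
    (A : Matrix ι κ R) (B : Matrix μ ν R) (u : ι → R) (v : μ → R) (x : κ → R) (y : ν → R) :
    (fun i : ι × μ => u i.1 * v i.2) ⬝ᵥ (A ⊗ₖ B) *ᵥ (fun j : κ × ν => x j.1 * y j.2) =
      (u ⬝ᵥ A *ᵥ x) * (v ⬝ᵥ B *ᵥ y) := by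
  simp only [dotProduct, mulVec, Fintype.sum_prod_type, kroneckerMap_apply]
  rw [Finset.sum_mul_sum]
  refine Finset.sum_congr rfl fun i _ => Finset.sum_congr rfl fun k _ => ?_
  rw [mul_mul_mul_comm, Finset.sum_mul_sum]
  simp only [Finset.mul_sum]
  refine Finset.sum_congr rfl fun j _ => Finset.sum_congr rfl fun l _ => ?_
  ring

theorem PosDef.mul_dotProduct_mulVec_pos_of_kronecker_self {n : Type*} [Fintype n]
    {B : Matrix n n ℂ} (h : (B ⊗ₖ B).PosDef) {x y : n → ℂ} (hx : x ≠ 0) (hy : y ≠ 0) :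
    0 < (star x ⬝ᵥ B *ᵥ x) * (star y ⬝ᵥ B *ᵥ y) := by
  rw [← dotProduct_kronecker_mulVec_mul]
  obtain ⟨i, hi⟩ := Function.ne_iff.mp hx
  obtain ⟨k, hk⟩ := Function.ne_iff.mp hy
  have hxy : (fun j : n × n => x j.1 * y j.2) ≠ 0 :=
    Function.ne_iff.mpr ⟨(i, k), mul_ne_zero hi hk⟩
  convert h.dotProduct_mulVec_pos hxy using 2
  funext j
  exact (star_mul' (x j.1) (y j.2)).symm

theorem isHermitian_of_forall_isSelfAdjoint_dotProduct_mulVec {n : Type*} [Fintype n]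
    {A : Matrix n n ℂ} (h : ∀ x, IsSelfAdjoint (star x ⬝ᵥ A *ᵥ x)) : A.IsHermitian := by
  classical
  rw [← isSymmetric_toEuclideanLin_iff, LinearMap.isSymmetric_iff_inner_map_self_real]
  intro v
  have hv := (h v.ofLp).star_eq
  rw [star_dotProduct] at hv
  simpa [EuclideanSpace.inner_eq_star_dotProduct, dotProduct_comm] using congrArg star hv

theorem posDef_of_forall_dotProduct_mulVec_pos {n : Type*} [Fintype n] {A : Matrix n n ℂ}
    (h : ∀ x ≠ 0, 0 < star x ⬝ᵥ A *ᵥ x) : A.PosDef := by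
  refine posDef_iff_dotProduct_mulVec.mpr
    ⟨isHermitian_of_forall_isSelfAdjoint_dotProduct_mulVec fun x => ?_, h⟩
  obtain rfl | hx := eq_or_ne x 0
  · simp
  · exact .of_nonneg (h x hx).le

end Matrix

theorem kronecker_sq_posDef_iff {n : ℕ} (B : Matrix (Fin n) (Fin n) ℂ) :
    (B ⊗ₖ B).PosDef ↔ B.IsHermitian ∧ (B.PosDef ∨ (-B).PosDef) := by
  constructor
  · intro h
    rcases Complex.forall_pos_or_forall_neg_pos_of_mul_pos (p := (· ≠ 0))
      fun x y => h.mul_dotProduct_mulVec_pos_of_kronecker_self with hpos | hneg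
    · have hB := posDef_of_forall_dotProduct_mulVec_pos hpos
      exact ⟨hB.isHermitian, .inl hB⟩
    · have hB : (-B).PosDef := posDef_of_forall_dotProduct_mulVec_pos fun x hx => by
        simpa only [neg_mulVec, dotProduct_neg] using hneg x hx
      exact ⟨by simpa using hB.isHermitian, .inr hB⟩
  · rintro ⟨-, hB | hB⟩
    · exact hB.kronecker hB
    · simpa only [neg_kronecker_neg] using hB.kronecker hB
end

section
/- Let B be an n×n complex matrix. The Kronecker product B ⊗ B is complex orthogonal (i.e., (B ⊗ B)ᵀ * (B ⊗ B) = 1) if and only if Bᵀ * B = 1 or (Complex.I • B)ᵀ * (Complex.I • B) = 1 (equivalently, Bᵀ * B = 1 or Bᵀ * B = -1). -/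
/-! Since `(B ⊗ₖ B)ᵀ * (B ⊗ₖ B) = (Bᵀ * B) ⊗ₖ (Bᵀ * B)`, it suffices that over a domain `M ⊗ₖ M = 1`
forces `M = ±1`: the entries `M i j * M k₀ k₀` of `M ⊗ₖ M` show that `M = c • 1` with
`c = M k₀ k₀` and `c * c = 1`. -/

open Matrix Kronecker

namespace Matrix

variable {R ι : Type*} [CommRing R] [DecidableEq ι]

theorem neg_one_kronecker_neg_one : (-1 : Matrix ι ι R) ⊗ₖ (-1 : Matrix ι ι R) = 1 := by
  rw [← neg_one_smul R (1 : Matrix ι ι R), smul_kronecker, kronecker_smul, smul_smul,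
    mul_neg_one, neg_neg, one_smul, one_kronecker_one]

variable [IsDomain R]

theorem eq_one_or_eq_neg_one_of_kronecker_self_eq_one {M : Matrix ι ι R} (h : M ⊗ₖ M = 1) :
    M = 1 ∨ M = -1 := by
  have entry (i j k l : ι) : M i j * M k l = if (i, k) = (j, l) then 1 else 0 := by
    simpa only [kronecker_apply, one_apply] using congrFun (congrFun h (i, k)) (j, l)
  cases isEmpty_or_nonempty ι
  · exact Or.inl (Subsingleton.elim _ _)
  obtain ⟨k₀⟩ := ‹Nonempty ι›
  set c := M k₀ k₀
  have hc : c * c = 1 := by simpa using entry k₀ k₀ k₀ k₀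
  have hc₀ : c ≠ 0 := left_ne_zero_of_mul_eq_one hc
  have hM : M = c • 1 := by
    ext i j
    by_cases hij : i = j
    · subst hij
      have : M i i * c = c * c := by rw [hc, entry]; simp
      simpa using mul_right_cancel₀ hc₀ this
    · have : M i j * c = 0 := by rw [entry]; simp [hij]
      simpa [hij] using (mul_eq_zero.mp this).resolve_right hc₀
  rcases mul_self_eq_one_iff.mp hc with hc₁ | hc₁ <;> rw [hM, hc₁] <;> simp

theorem kronecker_self_eq_one_iff {M : Matrix ι ι R} : M ⊗ₖ M = 1 ↔ M = 1 ∨ M = -1 := by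
  refine ⟨eq_one_or_eq_neg_one_of_kronecker_self_eq_one, ?_⟩
  rintro (rfl | rfl)
  exacts [one_kronecker_one, neg_one_kronecker_neg_one]

end Matrix

theorem kronecker_sq_complex_orthogonal_iff {n : ℕ} (B : Matrix (Fin n) (Fin n) ℂ) :
    (B ⊗ₖ B)ᵀ * (B ⊗ₖ B) = 1 ↔
      Bᵀ * B = 1 ∨ (Complex.I • B)ᵀ * (Complex.I • B) = 1 := by
  have hI : (Complex.I • B)ᵀ * (Complex.I • B) = -(Bᵀ * B) := by
    rw [transpose_smul, Matrix.smul_mul, Matrix.mul_smul, smul_smul, Complex.I_mul_I,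
      neg_one_smul]
  rw [← kroneckerMap_transpose, ← mul_kronecker_mul, kronecker_self_eq_one_iff, hI,
    neg_eq_iff_eq_neg]
end
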